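/- For any w ∈ ℝ^n, max(Bern(w, r̂ + Δ), 0) ≤ max(1, Γ/Γ̂) · WCBern(w; Γ̂), where WCBern(w; Γ̂) is the maximum of Bern(w, r') over all r' satisfying 0 ≤ r' ≤ p and (r'-r̂)^T G^{-1}(r'-r̂) ≤ Γ̂². In particular WCBern(w; Γ̂) ≥ 0. -/
import Mathlib

open Matrix Finset

/-- `Bern(w, r) = b(w)ᵀ(r - r̂) + sqrt(2 log(1/ε) Var(w,r)) + (log(1/ε)/(3n)) maxᵢ |wᵢ| pᵢ`. -/
noncomputable def bernFn (n : ℕ) (ε : ℝ) (w : Fin n → ℝ) (p rhat : Fin (n + n) → ℝ)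
    (r : Fin (n + n) → ℝ) : ℝ :=
  (((1 : ℝ) / n) * ∑ i : Fin n, w i * (r (Fin.castAdd n i) - rhat (Fin.castAdd n i))
      - ((1 : ℝ) / n) * ∑ i : Fin n, (r (Fin.natAdd n i) - rhat (Fin.natAdd n i)))
    + Real.sqrt (2 * Real.log (1 / ε) * (((1 : ℝ) / (n : ℝ) ^ 2) *
        ∑ i : Fin n, (w i) ^ 2 * r (Fin.castAdd n i) *
          (p (Fin.castAdd n i) - r (Fin.castAdd n i))))
    + (Real.log (1 / ε) / (3 * (n : ℝ))) * ⨆ i : Fin n, |w i| * p (Fin.castAdd n i)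

lemma bernFn_continuous (n : ℕ) (ε : ℝ) (w : Fin n → ℝ) (p rhat : Fin (n + n) → ℝ) :
    Continuous (bernFn n ε w p rhat) := by
  unfold bernFn
  apply Continuous.add
  apply Continuous.add
  · fun_prop
  · exact Real.continuous_sqrt.comp (by fun_prop)
  · exact continuous_const

/-- Abstract scalar step: `A + sb + C ≤ (1/t) * (t*A + sT + C)`. -/
lemma scale_aux (t A sb sT C : ℝ) (ht0 : 0 < t) (ht1 : t ≤ 1)
    (hsb : sb ≤ (1/t) * sT) (hC : 0 ≤ C) :
    A + sb + C ≤ (1/t) * (t * A + sT + C) := by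
  have hexp : (1/t) * (t * A + sT + C) = A + (1/t) * sT + (1/t) * C := by
    field_simp
  rw [hexp]
  have h1t : 1 ≤ 1/t := by
    rw [le_one_div (by norm_num) ht0]; simpa using ht1
  have hClast : C ≤ (1/t) * C := le_mul_of_one_le_left hC h1t
  exact add_le_add (add_le_add le_rfl hsb) hClast

/-- Pointwise variance scaling: `t² x(P-x) ≤ y(P-y)` for `y = a + t d`, `x = a + d`. -/
lemma var_scale_aux (t a d P : ℝ) (ht0 : 0 < t) (ht1 : t ≤ 1)
    (ha0 : 0 ≤ a) (haP : a ≤ P) (hb0 : 0 ≤ a + d) (hbP : a + d ≤ P) :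
    t ^ 2 * ((a + d) * (P - (a + d))) ≤ (a + t * d) * (P - (a + t * d)) := by
  have hg0 : 0 ≤ a * (P - a) := mul_nonneg ha0 (by linarith)
  have hg1 : 0 ≤ (a + d) * (P - (a + d)) := mul_nonneg hb0 (by linarith)
  have ht' : 0 ≤ t * (1 - t) := mul_nonneg ht0.le (by linarith)
  have hid : (a + t * d) * (P - (a + t * d)) - t ^ 2 * ((a + d) * (P - (a + d)))
      = (1 - t) * (a * (P - a)) + (t * (1 - t)) * ((a + d) * (P - (a + d)))
        + (t * (1 - t)) * d ^ 2 := by ring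
  nlinarith [mul_nonneg (by linarith : (0:ℝ) ≤ 1 - t) hg0, mul_nonneg ht' hg1,
    mul_nonneg ht' (sq_nonneg d)]

set_option maxHeartbeats 1000000 in
/-- `max(Bern(w, r̂ + Δ), 0) ≤ max(1, Γ/Γ̂)·WCBern(w; Γ̂)`, and `WCBern(w; Γ̂) ≥ 0`. -/
theorem stmt_11 (n : ℕ) (hn : 1 ≤ n) (ε : ℝ) (hε0 : 0 < ε) (hε1 : ε < 1)
    (p rhat Δ : Fin (n + n) → ℝ)
    (G : Matrix (Fin (n + n)) (Fin (n + n)) ℝ) (hG : G.PosDef)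
    (hp : ∀ i, 0 ≤ p i) (hrhat : ∀ i, 0 ≤ rhat i ∧ rhat i ≤ p i)
    (hr : ∀ i, 0 ≤ rhat i + Δ i ∧ rhat i + Δ i ≤ p i)
    (Γ Γhat : ℝ) (hΓ : 0 < Γ) (hΓhat : 0 < Γhat)
    (hΔ : Δ ⬝ᵥ (G⁻¹ *ᵥ Δ) = Γ ^ 2)
    (w : Fin n → ℝ) :
    0 ≤ sSup (bernFn n ε w p rhat ''
          {r | (∀ i, 0 ≤ r i ∧ r i ≤ p i) ∧
            (r - rhat) ⬝ᵥ (G⁻¹ *ᵥ (r - rhat)) ≤ Γhat ^ 2})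
    ∧ max (bernFn n ε w p rhat (fun i => rhat i + Δ i)) 0
        ≤ max 1 (Γ / Γhat) *
            sSup (bernFn n ε w p rhat ''
              {r | (∀ i, 0 ≤ r i ∧ r i ≤ p i) ∧
                (r - rhat) ⬝ᵥ (G⁻¹ *ᵥ (r - rhat)) ≤ Γhat ^ 2}) := by
  have hn0 : (0:ℝ) < n := by exact_mod_cast hn
  set S : Set (Fin (n + n) → ℝ) :=
    {r | (∀ i, 0 ≤ r i ∧ r i ≤ p i) ∧ (r - rhat) ⬝ᵥ (G⁻¹ *ᵥ (r - rhat)) ≤ Γhat ^ 2} with hSdef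
  set Q : ℝ := sSup (bernFn n ε w p rhat '' S) with hQdef
  have hL : 0 < Real.log (1 / ε) := Real.log_pos ((one_lt_div hε0).mpr hε1)
  -- the constant term is nonnegative
  have hsup0 : 0 ≤ ⨆ i : Fin n, |w i| * p (Fin.castAdd n i) := by
    have i0 : Fin n := ⟨0, hn⟩
    calc (0:ℝ) ≤ |w i0| * p (Fin.castAdd n i0) :=
          mul_nonneg (abs_nonneg _) (hp _)
      _ ≤ ⨆ i : Fin n, |w i| * p (Fin.castAdd n i) :=
          le_ciSup (f := fun i : Fin n => |w i| * p (Fin.castAdd n i))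
            (Finite.bddAbove_range _) i0
  have hc0 : 0 ≤ (Real.log (1 / ε) / (3 * (n:ℝ))) *
      ⨆ i : Fin n, |w i| * p (Fin.castAdd n i) :=
    mul_nonneg (by positivity) hsup0
  -- S is compact, hence image is bounded above
  have hScompact : IsCompact S := by
    have h1 : S = Set.Icc (0 : Fin (n+n) → ℝ) p ∩
        {r | (r - rhat) ⬝ᵥ (G⁻¹ *ᵥ (r - rhat)) ≤ Γhat ^ 2} := by
      ext r
      simp [hSdef, Set.mem_Icc, Pi.le_def, forall_and]
    rw [h1]
    apply IsCompact.inter_right isCompact_Icc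
    have hcont : Continuous fun r : Fin (n+n) → ℝ => (r - rhat) ⬝ᵥ (G⁻¹ *ᵥ (r - rhat)) := by
      simp only [dotProduct, mulVec, Pi.sub_apply]
      fun_prop
    exact isClosed_le hcont continuous_const
  have hbdd : BddAbove (bernFn n ε w p rhat '' S) :=
    (hScompact.image (bernFn_continuous n ε w p rhat)).bddAbove
  -- rhat belongs to S
  have hrhatS : rhat ∈ S := by
    refine ⟨hrhat, ?_⟩
    rw [sub_self]
    simp only [dotProduct, Pi.zero_apply, zero_mul, Finset.sum_const_zero]
    positivity
  -- Q ≥ 0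
  have hQ0 : 0 ≤ Q := by
    have hb : 0 ≤ bernFn n ε w p rhat rhat := by
      unfold bernFn
      simp only [sub_self, mul_zero, zero_mul, Finset.sum_const_zero, sub_zero, zero_add]
      have hs := Real.sqrt_nonneg (2 * Real.log (1 / ε) * (((1 : ℝ) / (n : ℝ) ^ 2) *
        ∑ i : Fin n, (w i) ^ 2 * rhat (Fin.castAdd n i) *
          (p (Fin.castAdd n i) - rhat (Fin.castAdd n i))))
      linarith [hc0]
    exact le_trans hb (le_csSup hbdd ⟨rhat, hrhatS, rfl⟩)
  refine ⟨hQ0, ?_⟩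
  -- the scaling parameter
  set t : ℝ := min 1 (Γhat / Γ) with htdef
  have ht0 : 0 < t := lt_min one_pos (by positivity)
  have ht1 : t ≤ 1 := min_le_left _ _
  have htΓ : t * Γ ≤ Γhat := by
    have hmr := min_le_right 1 (Γhat / Γ)
    calc t * Γ ≤ (Γhat / Γ) * Γ := by nlinarith
      _ = Γhat := by field_simp
  have hM : 1 / t = max 1 (Γ / Γhat) := by
    rw [htdef]
    rcases le_total Γhat Γ with h | h
    · rw [min_eq_right ((div_le_one hΓ).2 h), max_eq_right ((one_le_div hΓhat).2 h), one_div_div]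
    · rw [min_eq_left ((one_le_div hΓ).2 h), max_eq_left ((div_le_one hΓhat).2 h)]
      norm_num
  -- the scaled point
  set rt : Fin (n + n) → ℝ := fun i => rhat i + t * Δ i with hrtdef
  have hrtS : rt ∈ S := by
    constructor
    · intro i
      constructor
      · simp only [hrtdef]
        nlinarith [mul_nonneg (sub_nonneg.2 ht1) (hrhat i).1, mul_nonneg ht0.le (hr i).1]
      · simp only [hrtdef]
        nlinarith [mul_nonneg (sub_nonneg.2 ht1) (sub_nonneg.2 (hrhat i).2),
          mul_nonneg ht0.le (sub_nonneg.2 (hr i).2)]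
    · have heq : rt - rhat = t • Δ := by
        funext i
        simp [hrtdef, smul_eq_mul]
      rw [heq, smul_dotProduct, mulVec_smul, dotProduct_smul, smul_eq_mul, smul_eq_mul, hΔ]
      nlinarith [mul_le_mul htΓ htΓ (mul_nonneg ht0.le hΓ.le) hΓhat.le]
  have hrtQ : bernFn n ε w p rhat rt ≤ Q := le_csSup hbdd ⟨rt, hrtS, rfl⟩
  -- key scaling inequality
  have h1 : ∑ i : Fin n, w i * (rt (Fin.castAdd n i) - rhat (Fin.castAdd n i))
      = t * ∑ i : Fin n, w i * ((rhat (Fin.castAdd n i) + Δ (Fin.castAdd n i))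
          - rhat (Fin.castAdd n i)) := by
    rw [Finset.mul_sum]
    refine Finset.sum_congr rfl fun i _ => ?_
    simp only [hrtdef]
    ring
  have h2 : ∑ i : Fin n, (rt (Fin.natAdd n i) - rhat (Fin.natAdd n i))
      = t * ∑ i : Fin n, ((rhat (Fin.natAdd n i) + Δ (Fin.natAdd n i))
          - rhat (Fin.natAdd n i)) := by
    rw [Finset.mul_sum]
    refine Finset.sum_congr rfl fun i _ => ?_
    simp only [hrtdef]
    ring
  -- variance inequality
  have hV : t ^ 2 * (((1 : ℝ) / (n : ℝ) ^ 2) *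
      ∑ i : Fin n, (w i) ^ 2 * (rhat (Fin.castAdd n i) + Δ (Fin.castAdd n i)) *
        (p (Fin.castAdd n i) - (rhat (Fin.castAdd n i) + Δ (Fin.castAdd n i))))
      ≤ ((1 : ℝ) / (n : ℝ) ^ 2) *
      ∑ i : Fin n, (w i) ^ 2 * rt (Fin.castAdd n i) *
        (p (Fin.castAdd n i) - rt (Fin.castAdd n i)) := by
    have hpt : ∀ i ∈ Finset.univ (α := Fin n),
        t ^ 2 * ((w i) ^ 2 * (rhat (Fin.castAdd n i) + Δ (Fin.castAdd n i)) *
          (p (Fin.castAdd n i) - (rhat (Fin.castAdd n i) + Δ (Fin.castAdd n i))))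
        ≤ (w i) ^ 2 * rt (Fin.castAdd n i) * (p (Fin.castAdd n i) - rt (Fin.castAdd n i)) := by
      intro i _
      have hscal := var_scale_aux t (rhat (Fin.castAdd n i)) (Δ (Fin.castAdd n i))
        (p (Fin.castAdd n i)) ht0 ht1 (hrhat _).1 (hrhat _).2 (hr _).1 (hr _).2
      have hrteq : rt (Fin.castAdd n i) = rhat (Fin.castAdd n i) + t * Δ (Fin.castAdd n i) := by
        simp only [hrtdef]
      rw [hrteq]
      calc t ^ 2 * ((w i) ^ 2 * (rhat (Fin.castAdd n i) + Δ (Fin.castAdd n i)) *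
            (p (Fin.castAdd n i) - (rhat (Fin.castAdd n i) + Δ (Fin.castAdd n i))))
          = (w i) ^ 2 * (t ^ 2 * ((rhat (Fin.castAdd n i) + Δ (Fin.castAdd n i)) *
            (p (Fin.castAdd n i) - (rhat (Fin.castAdd n i) + Δ (Fin.castAdd n i))))) := by ring
        _ ≤ (w i) ^ 2 * ((rhat (Fin.castAdd n i) + t * Δ (Fin.castAdd n i)) *
            (p (Fin.castAdd n i) - (rhat (Fin.castAdd n i) + t * Δ (Fin.castAdd n i)))) :=
            mul_le_mul_of_nonneg_left hscal (sq_nonneg _)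
        _ = (w i) ^ 2 * (rhat (Fin.castAdd n i) + t * Δ (Fin.castAdd n i)) *
            (p (Fin.castAdd n i) - (rhat (Fin.castAdd n i) + t * Δ (Fin.castAdd n i))) := by ring
    have hsum := Finset.sum_le_sum hpt
    calc t ^ 2 * (((1 : ℝ) / (n : ℝ) ^ 2) * ∑ i : Fin n,
          (w i) ^ 2 * (rhat (Fin.castAdd n i) + Δ (Fin.castAdd n i)) *
            (p (Fin.castAdd n i) - (rhat (Fin.castAdd n i) + Δ (Fin.castAdd n i))))
        = ((1 : ℝ) / (n : ℝ) ^ 2) * ∑ i : Fin n,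
          t ^ 2 * ((w i) ^ 2 * (rhat (Fin.castAdd n i) + Δ (Fin.castAdd n i)) *
            (p (Fin.castAdd n i) - (rhat (Fin.castAdd n i) + Δ (Fin.castAdd n i)))) := by
          rw [Finset.mul_sum, Finset.mul_sum, Finset.mul_sum]
          exact Finset.sum_congr rfl fun i _ => by ring
      _ ≤ ((1 : ℝ) / (n : ℝ) ^ 2) * ∑ i : Fin n,
          (w i) ^ 2 * rt (Fin.castAdd n i) * (p (Fin.castAdd n i) - rt (Fin.castAdd n i)) :=
          mul_le_mul_of_nonneg_left hsum (by positivity)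
  -- sqrt inequality
  have hsqrt : Real.sqrt (2 * Real.log (1 / ε) * (((1 : ℝ) / (n : ℝ) ^ 2) *
      ∑ i : Fin n, (w i) ^ 2 * (rhat (Fin.castAdd n i) + Δ (Fin.castAdd n i)) *
        (p (Fin.castAdd n i) - (rhat (Fin.castAdd n i) + Δ (Fin.castAdd n i)))))
      ≤ (1/t) * Real.sqrt (2 * Real.log (1 / ε) * (((1 : ℝ) / (n : ℝ) ^ 2) *
      ∑ i : Fin n, (w i) ^ 2 * rt (Fin.castAdd n i) *
        (p (Fin.castAdd n i) - rt (Fin.castAdd n i)))) := by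
    set Vb := ((1 : ℝ) / (n : ℝ) ^ 2) *
      ∑ i : Fin n, (w i) ^ 2 * (rhat (Fin.castAdd n i) + Δ (Fin.castAdd n i)) *
        (p (Fin.castAdd n i) - (rhat (Fin.castAdd n i) + Δ (Fin.castAdd n i))) with hVb
    set Vt := ((1 : ℝ) / (n : ℝ) ^ 2) *
      ∑ i : Fin n, (w i) ^ 2 * rt (Fin.castAdd n i) *
        (p (Fin.castAdd n i) - rt (Fin.castAdd n i)) with hVt
    have hm : t ^ 2 * (2 * Real.log (1 / ε) * Vb) ≤ 2 * Real.log (1 / ε) * Vt := by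
      have hmm := mul_le_mul_of_nonneg_left hV (by positivity : (0:ℝ) ≤ 2 * Real.log (1 / ε))
      calc t ^ 2 * (2 * Real.log (1 / ε) * Vb)
          = 2 * Real.log (1 / ε) * (t ^ 2 * Vb) := by ring
        _ ≤ 2 * Real.log (1 / ε) * Vt := hmm
    have heq : Real.sqrt (2 * Real.log (1 / ε) * Vb)
        = (1/t) * Real.sqrt (t ^ 2 * (2 * Real.log (1 / ε) * Vb)) := by
      rw [Real.sqrt_mul (sq_nonneg t), Real.sqrt_sq ht0.le]
      field_simp
    rw [heq]
    exact mul_le_mul_of_nonneg_left (Real.sqrt_le_sqrt hm) (by positivity)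
  have hkey : bernFn n ε w p rhat (fun i => rhat i + Δ i) ≤ (1/t) * bernFn n ε w p rhat rt := by
    have hbrt : bernFn n ε w p rhat rt
        = t * (((1 : ℝ) / n) * ∑ i : Fin n, w i * ((rhat (Fin.castAdd n i) + Δ (Fin.castAdd n i))
              - rhat (Fin.castAdd n i))
            - ((1 : ℝ) / n) * ∑ i : Fin n, ((rhat (Fin.natAdd n i) + Δ (Fin.natAdd n i))
              - rhat (Fin.natAdd n i)))
          + Real.sqrt (2 * Real.log (1 / ε) * (((1 : ℝ) / (n : ℝ) ^ 2) *
              ∑ i : Fin n, (w i) ^ 2 * rt (Fin.castAdd n i) *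
                (p (Fin.castAdd n i) - rt (Fin.castAdd n i))))
          + (Real.log (1 / ε) / (3 * (n : ℝ))) * ⨆ i : Fin n, |w i| * p (Fin.castAdd n i) := by
      unfold bernFn
      rw [h1, h2]
      ring
    have hbb : bernFn n ε w p rhat (fun i => rhat i + Δ i)
        = (((1 : ℝ) / n) * ∑ i : Fin n, w i * ((rhat (Fin.castAdd n i) + Δ (Fin.castAdd n i))
              - rhat (Fin.castAdd n i))
            - ((1 : ℝ) / n) * ∑ i : Fin n, ((rhat (Fin.natAdd n i) + Δ (Fin.natAdd n i))
              - rhat (Fin.natAdd n i)))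
          + Real.sqrt (2 * Real.log (1 / ε) * (((1 : ℝ) / (n : ℝ) ^ 2) *
              ∑ i : Fin n, (w i) ^ 2 * (rhat (Fin.castAdd n i) + Δ (Fin.castAdd n i)) *
                (p (Fin.castAdd n i) - (rhat (Fin.castAdd n i) + Δ (Fin.castAdd n i)))))
          + (Real.log (1 / ε) / (3 * (n : ℝ))) * ⨆ i : Fin n, |w i| * p (Fin.castAdd n i) := by
      simp only [bernFn]
    rw [hbb, hbrt]
    exact scale_aux t _ _ _ _ ht0 ht1 hsqrt hc0
  have hfinal : bernFn n ε w p rhat (fun i => rhat i + Δ i) ≤ max 1 (Γ / Γhat) * Q :=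
    calc bernFn n ε w p rhat (fun i => rhat i + Δ i)
        ≤ (1/t) * bernFn n ε w p rhat rt := hkey
      _ ≤ (1/t) * Q := mul_le_mul_of_nonneg_left hrtQ (by positivity)
      _ = max 1 (Γ / Γhat) * Q := by rw [hM]
  exact max_le hfinal (mul_nonneg (le_trans zero_le_one (le_max_left _ _)) hQ0)
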